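/- Let (E_i)_{i=1}^k be the eigenspaces (with eigenfunctions λ_i) of an orthogonally integrable conformal Killing 2-tensor forming a CK-net. If E_i^⊥ is geodesic, then E_i is spherical; i.e. the mean curvature normal H_i of E_i satisfies ∇_x^{E_i^⊥} H_i = 0 for all x ∈ Γ(E_i). -/

import Mathlib

/-
STATEMENT 17: Let `(E i)` be the eigenspaces (eigenfunctions `lam i`) of an
orthogonally integrable conformal Killing 2-tensor, forming a CK-net.  If `E i ^⊥`
is geodesic, then `E i` is spherical: the mean curvature normal
`H_i = −½ Σ_{j≠i} (∇ log|lam i − lam j|)^j` of `E i` satisfies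
`∇ₓ^{E_i^⊥} H_i = 0` for all `x ∈ Γ(E i)`.

Model: coordinates adapted to the twisted product induced by the CK-net; block `i`
of the coordinates spans `E i`, so the metric is block diagonal, with block `i`
equal to `ρ_i²` times a tensor depending only on the block-`i` coordinates (twist
functions `ρ_i`).  The conformal Killing structure is encoded by the mean-curvature
equation relating the twist functions to the eigenfunctions:
`(∇ log ρ_j)^{⊥j} = ½ Σ_{l≠j} (∇ log|lam j − lam l|)^l`,
and `E i ^⊥` geodesic by each `ρ_j` (`j ≠ i`) being independent of block `i`.
-/

noncomputable section

variable {ι : Type} [Fintype ι] [DecidableEq ι]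

/-- Partial derivative of a function on the coordinate chart `ι → ℝ`. -/
def pd (c : ι) (f : (ι → ℝ) → ℝ) (x : ι → ℝ) : ℝ :=
  fderiv ℝ f x (Pi.single c 1)

/-- Christoffel symbols `Γ^k_{ij}` of the Levi-Civita connection of a metric `g`
with pointwise inverse `ginv`. -/
def christoffel (g ginv : (ι → ℝ) → Matrix ι ι ℝ) (k i j : ι) (x : ι → ℝ) : ℝ :=
  (1/2) * ∑ l, ginv x k l *
    (pd i (fun y => g y l j) x + pd j (fun y => g y l i) x - pd l (fun y => g y i j) x)

lemma hasDerivAt_line (x v : ι → ℝ) (s : ℝ) :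
    HasDerivAt (fun t : ℝ => x + t • v) v s := by
  simpa using ((hasDerivAt_id s).smul_const v).const_add x

lemma pd_eq_zero_of_line_const (c : ι) (F : (ι → ℝ) → ℝ) (x : ι → ℝ)
    (h : ∀ t : ℝ, F (x + t • (Pi.single c 1 : ι → ℝ)) = F x) : pd c F x = 0 := by
  by_cases hd : DifferentiableAt ℝ F x
  · have h0 : x + (0:ℝ) • (Pi.single c 1 : ι → ℝ) = x := by simp
    have hF' : HasFDerivAt F (fderiv ℝ F x) (x + (0:ℝ) • (Pi.single c 1 : ι → ℝ)) := by
      rw [h0]; exact hd.hasFDerivAt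
    have h2 := hF'.comp_hasDerivAt (0:ℝ) (hasDerivAt_line x (Pi.single c 1 : ι → ℝ) 0)
    have h3 : (fun t : ℝ => F (x + t • (Pi.single c 1 : ι → ℝ))) = fun _ => F x := funext fun t => h t
    rw [Function.comp_def, h3] at h2
    exact h2.unique (hasDerivAt_const 0 (F x))
  · show fderiv ℝ F x (Pi.single c (1:ℝ)) = 0
    rw [fderiv_zero_of_not_differentiableAt hd]
    rfl

lemma line_const_of_pd_zero (c : ι) (F : (ι → ℝ) → ℝ) (hF : Differentiable ℝ F)
    (h : ∀ y, pd c F y = 0) (x : ι → ℝ) (t : ℝ) :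
    F (x + t • (Pi.single c 1 : ι → ℝ)) = F x := by
  have key : ∀ s : ℝ, HasDerivAt (fun u : ℝ => F (x + u • (Pi.single c 1 : ι → ℝ))) 0 s := by
    intro s
    have h2 := ((hF (x + s • (Pi.single c 1 : ι → ℝ))).hasFDerivAt).comp_hasDerivAt s
      (hasDerivAt_line x (Pi.single c (1:ℝ)) s)
    have h3 : fderiv ℝ F (x + s • (Pi.single c 1 : ι → ℝ)) (Pi.single c (1:ℝ)) = 0 := h _
    rw [h3] at h2
    exact h2
  have hconst := is_const_of_deriv_eq_zero (fun s => (key s).differentiableAt)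
    (fun s => (key s).deriv) t 0
  simpa using hconst

lemma pd_translate (F : (ι → ℝ) → ℝ) (hF : Differentiable ℝ F) (w : ι → ℝ)
    (hc : ∀ y, F (y + w) = F y) (e : ι) (x : ι → ℝ) :
    pd e F (x + w) = pd e F x := by
  have hτ : HasFDerivAt (fun y : ι → ℝ => y + w) (ContinuousLinearMap.id ℝ (ι → ℝ)) x :=
    (hasFDerivAt_id x).add_const w
  have h2 := ((hF (x + w)).hasFDerivAt).comp x hτ
  have h3 : (F ∘ fun y : ι → ℝ => y + w) = F := funext fun y => hc y
  rw [h3] at h2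
  have h4 : fderiv ℝ F x = (fderiv ℝ F (x + w)).comp (ContinuousLinearMap.id ℝ (ι → ℝ)) :=
    h2.fderiv
  show fderiv ℝ F (x + w) (Pi.single e 1) = fderiv ℝ F x (Pi.single e 1)
  rw [h4]
  rfl

lemma pd_zero_fn (c : ι) (F : (ι → ℝ) → ℝ) (h : ∀ y, F y = 0) (x : ι → ℝ) :
    pd c F x = 0 := by
  have h3 : F = fun _ => (0:ℝ) := funext h
  show fderiv ℝ F x (Pi.single c (1:ℝ)) = 0
  rw [h3]
  simp

variable {k : ℕ} {m : Fin k → ℕ}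

abbrev SIdx (m : Fin k → ℕ) := (i : Fin k) × Fin (m i)

/-- A function on the chart depends only on the block-`i` coordinates. -/
def DependsOnlyOn (i : Fin k) (f : (SIdx m → ℝ) → ℝ) : Prop :=
  ∀ x x' : SIdx m → ℝ, (∀ a : Fin (m i), x ⟨i, a⟩ = x' ⟨i, a⟩) → f x = f x'

lemma sum_sigma_single (F : SIdx m → ℝ) (j : Fin k)
    (h0 : ∀ e : SIdx m, e.1 ≠ j → F e = 0) :
    ∑ e : SIdx m, F e = ∑ b : Fin (m j), F ⟨j, b⟩ := by
  rw [← Finset.univ_sigma_univ, Finset.sum_sigma]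
  exact Finset.sum_eq_single j
    (fun p _ hp => Finset.sum_eq_zero fun q _ => h0 ⟨p, q⟩ hp)
    (by simp)

lemma block_mul_inv (g ginv : (SIdx m → ℝ) → Matrix (SIdx m) (SIdx m) ℝ)
    (hginv : ∀ x, g x * ginv x = 1)
    (hblock : ∀ x (c d : SIdx m), c.1 ≠ d.1 → g x c d = 0)
    (j : Fin k) (y : SIdx m → ℝ) :
    (Matrix.of fun b b' : Fin (m j) => g y ⟨j, b⟩ ⟨j, b'⟩) *
      (Matrix.of fun b b' : Fin (m j) => ginv y ⟨j, b⟩ ⟨j, b'⟩) = 1 := by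
  ext b b'
  rw [Matrix.mul_apply]
  have h1 : (g y * ginv y) ⟨j, b⟩ ⟨j, b'⟩ = (1 : Matrix (SIdx m) (SIdx m) ℝ) ⟨j, b⟩ ⟨j, b'⟩ := by
    rw [hginv y]
  rw [Matrix.mul_apply] at h1
  rw [sum_sigma_single (fun e => g y ⟨j, b⟩ e * ginv y e ⟨j, b'⟩) j
    (fun e he => by
      show g y ⟨j, b⟩ e * ginv y e ⟨j, b'⟩ = 0
      rw [hblock y _ _ (Ne.symm he), zero_mul])] at h1
  simp only [Matrix.of_apply]
  rw [h1]
  simp [Matrix.one_apply]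

lemma ginv_block_eq (g ginv : (SIdx m → ℝ) → Matrix (SIdx m) (SIdx m) ℝ)
    (hginv : ∀ x, g x * ginv x = 1)
    (hblock : ∀ x (c d : SIdx m), c.1 ≠ d.1 → g x c d = 0)
    (j : Fin k) (y : SIdx m → ℝ) (b b' : Fin (m j)) :
    ginv y ⟨j, b⟩ ⟨j, b'⟩ = (Matrix.of fun b b' : Fin (m j) => g y ⟨j, b⟩ ⟨j, b'⟩)⁻¹ b b' := by
  rw [Matrix.inv_eq_right_inv (block_mul_inv g ginv hginv hblock j y)]
  rfl

lemma ginv_offblock (g ginv : (SIdx m → ℝ) → Matrix (SIdx m) (SIdx m) ℝ)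
    (hginv : ∀ x, g x * ginv x = 1)
    (hblock : ∀ x (c d : SIdx m), c.1 ≠ d.1 → g x c d = 0)
    (y : SIdx m → ℝ) (c e : SIdx m) (h : c.1 ≠ e.1) : ginv y c e = 0 := by
  have hMW := block_mul_inv g ginv hginv hblock c.1 y
  have hWM := mul_eq_one_comm.mp hMW
  have hMu : (Matrix.of fun b b' : Fin (m c.1) => g y ⟨c.1, b⟩ ⟨c.1, b'⟩).mulVec
      (fun b3 => ginv y ⟨c.1, b3⟩ e) = 0 := by
    ext b
    have h1 : (g y * ginv y) ⟨c.1, b⟩ e = 0 := by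
      rw [hginv y]
      exact Matrix.one_apply_ne (fun hh => h (by rw [← hh]))
    rw [Matrix.mul_apply] at h1
    rw [sum_sigma_single (fun e' => g y ⟨c.1, b⟩ e' * ginv y e' e) c.1
      (fun e' he' => by
        show g y ⟨c.1, b⟩ e' * ginv y e' e = 0
        rw [hblock y ⟨c.1, b⟩ e' (Ne.symm he'), zero_mul])] at h1
    simpa [Matrix.mulVec, dotProduct] using h1
  have hu0 : (fun b3 => ginv y ⟨c.1, b3⟩ e) = 0 := by
    have h2 : (Matrix.of fun b b' : Fin (m c.1) => ginv y ⟨c.1, b⟩ ⟨c.1, b'⟩).mulVec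
        ((Matrix.of fun b b' : Fin (m c.1) => g y ⟨c.1, b⟩ ⟨c.1, b'⟩).mulVec
          (fun b3 => ginv y ⟨c.1, b3⟩ e)) = fun b3 => ginv y ⟨c.1, b3⟩ e := by
      rw [Matrix.mulVec_mulVec, hWM, Matrix.one_mulVec]
    rw [hMu, Matrix.mulVec_zero] at h2
    exact h2.symm
  exact congrFun hu0 c.2

/-- The component in direction `c` of the mean curvature normal
`H_i = −½ Σ_{j≠i} (∇ log|lam i − lam j|)^j` of the eigenspace `E i`
(`(·)^j` is the orthogonal projection onto the block-`j` eigenspace). -/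
def meanCurv (ginv : (SIdx m → ℝ) → Matrix (SIdx m) (SIdx m) ℝ)
    (lam : Fin k → (SIdx m → ℝ) → ℝ) (i : Fin k) (x : SIdx m → ℝ) (c : SIdx m) : ℝ :=
  if c.1 = i then 0 else
    -(1/2) * ∑ b' : Fin (m c.1), ginv x c ⟨c.1, b'⟩ *
      pd ⟨c.1, b'⟩ (fun y => Real.log |lam i y - lam c.1 y|) x

set_option maxHeartbeats 1000000 in
theorem geodesic_complement_implies_spherical
    (g ginv : (SIdx m → ℝ) → Matrix (SIdx m) (SIdx m) ℝ)
    (ρ : Fin k → (SIdx m → ℝ) → ℝ) (lam : Fin k → (SIdx m → ℝ) → ℝ)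
    (hg : ∀ c d, ContDiff ℝ (⊤ : ℕ∞) (fun x => g x c d))
    (hgsymm : ∀ x c d, g x c d = g x d c)
    (hginv : ∀ x, g x * ginv x = 1)
    -- the net is the coordinate block net: the metric is block diagonal
    (hblock : ∀ x (c d : SIdx m), c.1 ≠ d.1 → g x c d = 0)
    -- twisted product structure: block `i` is `ρ_i²` times a tensor of block `i` only
    (hρ : ∀ i, ContDiff ℝ (⊤ : ℕ∞) (ρ i)) (hρpos : ∀ i x, 0 < ρ i x)
    (htwist : ∀ (i : Fin k) (a b : Fin (m i)),
      DependsOnlyOn i (fun x => g x ⟨i, a⟩ ⟨i, b⟩ / (ρ i x)^2))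
    -- eigenfunctions of the conformal Killing tensor, pairwise distinct
    (hlam : ∀ i, ContDiff ℝ (⊤ : ℕ∞) (lam i))
    (hdist : ∀ i j x, i ≠ j → lam i x ≠ lam j x)
    -- the CK-net (conformal Killing) equation relating twist functions and
    -- eigenfunctions: `(∇ log ρ_j)^{⊥j} = ½ Σ_{l≠j} (∇ log|lam j − lam l|)^l`
    (hCK : ∀ (j : Fin k) (c : SIdx m), c.1 ≠ j → ∀ x,
      pd c (fun y => Real.log (ρ j y)) x
        = (1/2) * pd c (fun y => Real.log |lam j y - lam c.1 y|) x)
    -- `E i ^⊥` is geodesic: each `ρ_j`, `j ≠ i`, is independent of block `i`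
    (i : Fin k)
    (hgeo : ∀ j, j ≠ i → ∀ (a : Fin (m i)) x, pd ⟨i, a⟩ (ρ j) x = 0) :
    -- then `E i` is spherical: `∇ₓ^{E_i^⊥} H_i = 0` for `x ∈ Γ(E i)`
    ∀ (a : Fin (m i)) (c : SIdx m), c.1 ≠ i → ∀ x,
      pd ⟨i, a⟩ (fun y => meanCurv ginv lam i y c) x
        + ∑ l, christoffel g ginv c ⟨i, a⟩ l x * meanCurv ginv lam i x l = 0 := by
  intro a c hc x
  obtain ⟨j, cb⟩ := c
  replace hc : j ≠ i := hc
  -- coordinates in blocks other than `i` are unchanged along the line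
  have hcoord : ∀ (p : Fin k), p ≠ i → ∀ (b : Fin (m p)) (y : SIdx m → ℝ) (t : ℝ),
      (y + t • (Pi.single (⟨i, a⟩ : SIdx m) 1 : SIdx m → ℝ)) ⟨p, b⟩ = y ⟨p, b⟩ := by
    intro p hpi b y t
    have hne : (⟨p, b⟩ : SIdx m) ≠ ⟨i, a⟩ := by
      intro hh
      apply hpi
      exact congrArg (fun s : SIdx m => s.1) hh
    simp [Pi.single_eq_of_ne hne]
  -- twist functions of the other blocks are constant along the line
  have hρconst : ∀ (p : Fin k), p ≠ i → ∀ (y : SIdx m → ℝ) (t : ℝ),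
      ρ p (y + t • (Pi.single (⟨i, a⟩ : SIdx m) 1 : SIdx m → ℝ)) = ρ p y := fun p hpi y t =>
    line_const_of_pd_zero ⟨i, a⟩ (ρ p) ((hρ p).differentiable (by simp))
      (fun y' => hgeo p hpi a y') y t
  -- metric blocks other than block `i` are constant along the line
  have hgblock : ∀ (p : Fin k), p ≠ i → ∀ (b1 b2 : Fin (m p)) (y : SIdx m → ℝ) (t : ℝ),
      g (y + t • (Pi.single (⟨i, a⟩ : SIdx m) 1 : SIdx m → ℝ)) ⟨p, b1⟩ ⟨p, b2⟩
        = g y ⟨p, b1⟩ ⟨p, b2⟩ := by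
    intro p hpi b1 b2 y t
    have ht := htwist p b1 b2 (y + t • (Pi.single (⟨i, a⟩ : SIdx m) 1 : SIdx m → ℝ)) y
      (fun b => hcoord p hpi b y t)
    have ht' : g (y + t • (Pi.single (⟨i, a⟩ : SIdx m) 1 : SIdx m → ℝ)) ⟨p, b1⟩ ⟨p, b2⟩
          / (ρ p (y + t • (Pi.single (⟨i, a⟩ : SIdx m) 1 : SIdx m → ℝ)))^2
        = g y ⟨p, b1⟩ ⟨p, b2⟩ / (ρ p y)^2 := ht
    rw [hρconst p hpi y t] at ht'
    have hne : (ρ p y)^2 ≠ 0 := pow_ne_zero 2 (ne_of_gt (hρpos p y))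
    rw [div_eq_div_iff hne hne] at ht'
    exact mul_right_cancel₀ hne ht'
  -- inverse-metric blocks other than block `i` are constant along the line
  have hginvblock : ∀ (p : Fin k), p ≠ i → ∀ (b1 b2 : Fin (m p)) (y : SIdx m → ℝ) (t : ℝ),
      ginv (y + t • (Pi.single (⟨i, a⟩ : SIdx m) 1 : SIdx m → ℝ)) ⟨p, b1⟩ ⟨p, b2⟩
        = ginv y ⟨p, b1⟩ ⟨p, b2⟩ := by
    intro p hpi b1 b2 y t
    rw [ginv_block_eq g ginv hginv hblock p _ b1 b2,
      ginv_block_eq g ginv hginv hblock p y b1 b2]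
    have hM : (Matrix.of fun b b' : Fin (m p) =>
          g (y + t • (Pi.single (⟨i, a⟩ : SIdx m) 1 : SIdx m → ℝ)) ⟨p, b⟩ ⟨p, b'⟩)
        = (Matrix.of fun b b' : Fin (m p) => g y ⟨p, b⟩ ⟨p, b'⟩) := by
      ext b b'
      exact hgblock p hpi b b' y t
    rw [hM]
  -- facts about the log-eigenvalue-difference functions
  have hfdiff : ∀ p, p ≠ i → Differentiable ℝ (fun y => Real.log |lam i y - lam p y|) := by
    intro p hpi
    have he : (fun y => Real.log |lam i y - lam p y|)
        = fun y => Real.log (lam i y - lam p y) := funext fun y => Real.log_abs _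
    rw [he]
    exact Differentiable.log
      (((hlam i).differentiable (by simp)).sub ((hlam p).differentiable (by simp)))
      (fun y => sub_ne_zero.mpr (hdist i p y (Ne.symm hpi)))
  have hfpd0 : ∀ p, p ≠ i → ∀ (a' : Fin (m i)) (y : SIdx m → ℝ),
      pd ⟨i, a'⟩ (fun z => Real.log |lam i z - lam p z|) y = 0 := by
    intro p hpi a' y
    have hck : pd ⟨i, a'⟩ (fun z => Real.log (ρ p z)) y
        = (1/2) * pd ⟨i, a'⟩ (fun z => Real.log |lam p z - lam i z|) y :=
      hCK p ⟨i, a'⟩ (fun hh => hpi hh.symm) y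
    have hlog : pd ⟨i, a'⟩ (fun z => Real.log (ρ p z)) y = 0 := by
      have h2 : HasFDerivAt (fun z => Real.log (ρ p z))
          ((ρ p y)⁻¹ • fderiv ℝ (ρ p) y) y :=
        (Real.hasDerivAt_log (ne_of_gt (hρpos p y))).comp_hasFDerivAt y
          (((hρ p).differentiable (by simp)) y).hasFDerivAt
      have h3 : fderiv ℝ (ρ p) y (Pi.single ⟨i, a'⟩ 1) = 0 := hgeo p hpi a' y
      show fderiv ℝ (fun z => Real.log (ρ p z)) y (Pi.single ⟨i, a'⟩ 1) = 0
      rw [h2.fderiv]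
      simp [h3]
    have habs : (fun z => Real.log |lam p z - lam i z|)
        = (fun z => Real.log |lam i z - lam p z|) := funext fun z => by rw [abs_sub_comm]
    rw [hlog, habs] at hck
    linarith
  have hfline : ∀ p, p ≠ i → ∀ (y : SIdx m → ℝ) (t : ℝ),
      (fun z => Real.log |lam i z - lam p z|)
          (y + t • (Pi.single (⟨i, a⟩ : SIdx m) 1 : SIdx m → ℝ))
        = (fun z => Real.log |lam i z - lam p z|) y := fun p hpi y t =>
    line_const_of_pd_zero ⟨i, a⟩ _ (hfdiff p hpi) (hfpd0 p hpi a) y t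
  have hfpdconst : ∀ p, p ≠ i → ∀ (e : SIdx m) (y : SIdx m → ℝ) (t : ℝ),
      pd e (fun z => Real.log |lam i z - lam p z|)
          (y + t • (Pi.single (⟨i, a⟩ : SIdx m) 1 : SIdx m → ℝ))
        = pd e (fun z => Real.log |lam i z - lam p z|) y := fun p hpi e y t =>
    pd_translate _ (hfdiff p hpi) _ (fun y' => hfline p hpi y' t) e y
  -- Part A : the partial-derivative term vanishes
  have hA : pd ⟨i, a⟩ (fun y => meanCurv ginv lam i y ⟨j, cb⟩) x = 0 := by
    apply pd_eq_zero_of_line_const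
    intro t
    show meanCurv ginv lam i (x + t • (Pi.single (⟨i, a⟩ : SIdx m) 1 : SIdx m → ℝ)) ⟨j, cb⟩
      = meanCurv ginv lam i x ⟨j, cb⟩
    simp only [meanCurv]
    rw [if_neg hc, if_neg hc]
    congr 1
    apply Finset.sum_congr rfl
    intro b' _
    rw [hginvblock j hc cb b' x t, hfpdconst j hc ⟨j, b'⟩ x t]
  -- Part B : all Christoffel terms vanish
  have hB : ∀ l : SIdx m,
      christoffel g ginv ⟨j, cb⟩ ⟨i, a⟩ l x * meanCurv ginv lam i x l = 0 := by
    intro l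
    obtain ⟨p, lb⟩ := l
    by_cases hp : p = i
    · have hmc : meanCurv ginv lam i x ⟨p, lb⟩ = 0 := by simp [meanCurv, hp]
      rw [hmc, mul_zero]
    · have hch : christoffel g ginv ⟨j, cb⟩ ⟨i, a⟩ ⟨p, lb⟩ x = 0 := by
        unfold christoffel
        rw [Finset.sum_eq_zero]
        · ring
        intro e _
        obtain ⟨q, eb⟩ := e
        by_cases hq : q = j
        · subst hq
          have h2 : pd ⟨p, lb⟩ (fun y => g y ⟨q, eb⟩ ⟨i, a⟩) x = 0 :=
            pd_zero_fn _ _ (fun y => hblock y ⟨q, eb⟩ ⟨i, a⟩ hc) x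
          have h3 : pd ⟨q, eb⟩ (fun y => g y ⟨i, a⟩ ⟨p, lb⟩) x = 0 :=
            pd_zero_fn _ _ (fun y => hblock y ⟨i, a⟩ ⟨p, lb⟩ (fun hh => hp hh.symm)) x
          have h1 : pd ⟨i, a⟩ (fun y => g y ⟨q, eb⟩ ⟨p, lb⟩) x = 0 := by
            by_cases hpj : p = q
            · subst hpj
              exact pd_eq_zero_of_line_const _ _ x (fun t => hgblock p hp eb lb x t)
            · exact pd_zero_fn _ _
                (fun y => hblock y ⟨q, eb⟩ ⟨p, lb⟩ (fun hh => hpj hh.symm)) x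
          rw [h1, h2, h3]
          ring
        · rw [ginv_offblock g ginv hginv hblock x ⟨j, cb⟩ ⟨q, eb⟩ (fun hh => hq hh.symm)]
          ring
      rw [hch, zero_mul]
  rw [hA, Finset.sum_eq_zero (fun l _ => hB l), add_zero]
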